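/- Let ι = erf⁻¹ on (0,1) and define E(ρ) = ρ·ι'(ρ)/ι(ρ). Then lim_{ρ→0⁺} E'(ρ) = 0 and lim_{ρ→0⁺} E''(ρ) = π/3. -/

import Mathlib

/-!
`erfInv = Function.invFun erf` is a genuine inverse of `erf` on the open set `range erf ∋ 0`, since
`erf` is continuous and strictly increasing; there the inverse function theorem gives
`ι' = D := (√π/2) e^{ι²}`, hence `D' = 2ιD²`, and `E'`, `E''` are explicit in `ρ, ι, D, ι⁻¹`.
Their singular parts are governed by `ρ/ι → (√π/2)⁻¹` and by `(ι - ρD)/ρ³ → -(2/3)(√π/2)³`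
(L'Hôpital), which gives `E' → 0` and `E'' → (4/3)(√π/2)² = π/3`.
-/

/-- The Gaussian error function `erf z = (2/√π) ∫₀^z e^{-t²} dt`. -/
noncomputable def erf (z : ℝ) : ℝ :=
  (2 / Real.sqrt Real.pi) * ∫ t in (0:ℝ)..z, Real.exp (-t ^ 2)

/-- The inverse of the Gaussian error function. -/
noncomputable def erfInv : ℝ → ℝ := Function.invFun erf

/-- The elasticity of the inverse error function. -/
noncomputable def E (ρ : ℝ) : ℝ := ρ * deriv erfInv ρ / erfInv ρ

open Real Set Filter Topology Function

namespace StrictMono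

variable {f : ℝ → ℝ}

theorem range_mem_nhds (hf : StrictMono f) (hc : Continuous f) (x : ℝ) :
    range f ∈ 𝓝 (f x) := by
  refine mem_of_superset (Ioo_mem_nhds (hf (sub_one_lt x)) (hf (lt_add_one x))) ?_
  intro y hy
  obtain ⟨z, -, rfl⟩ :=
    intermediate_value_Ioo (by linarith : x - 1 ≤ x + 1) hc.continuousOn hy
  exact mem_range_self z

theorem isOpen_range (hf : StrictMono f) (hc : Continuous f) : IsOpen (range f) :=
  isOpen_iff_mem_nhds.2 <| by rintro _ ⟨x, rfl⟩; exact hf.range_mem_nhds hc x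

theorem continuousAt_invFun (hf : StrictMono f) (hc : Continuous f) (x : ℝ) :
    ContinuousAt (invFun f) (f x) := by
  have hinv := leftInverse_invFun hf.injective
  have hmono : MonotoneOn (invFun f) (range f) := by
    rintro _ ⟨a, rfl⟩ _ ⟨b, rfl⟩ hab
    rw [hinv a, hinv b]
    exact hf.le_iff_le.1 hab
  refine continuousAt_of_monotoneOn_of_image_mem_nhds hmono (hf.range_mem_nhds hc x) ?_
  rw [← range_comp, hinv.comp_eq_id, range_id]
  exact univ_mem

theorem hasDerivAt_invFun (hf : StrictMono f) (hc : Continuous f) {x f' : ℝ}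
    (hd : HasDerivAt f f' x) (hf' : f' ≠ 0) : HasDerivAt (invFun f) f'⁻¹ (f x) := by
  refine HasDerivAt.of_local_left_inverse (hf.continuousAt_invFun hc x)
    (by rwa [leftInverse_invFun hf.injective x]) hf' ?_
  filter_upwards [hf.range_mem_nhds hc x] with y hy using invFun_eq hy

end StrictMono

theorem hasDerivAt_erf (x : ℝ) : HasDerivAt erf (2 / √π * exp (-x ^ 2)) x := by
  have hc : Continuous fun t : ℝ => exp (-t ^ 2) := by fun_prop
  exact (intervalIntegral.integral_hasDerivAt_right (hc.intervalIntegrable _ _)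
    (hc.stronglyMeasurableAtFilter _ _) hc.continuousAt).const_mul _

theorem erf_strictMono : StrictMono erf :=
  strictMono_of_deriv_pos fun x => by rw [(hasDerivAt_erf x).deriv]; positivity

theorem continuous_erf : Continuous erf :=
  continuous_iff_continuousAt.2 fun x => (hasDerivAt_erf x).continuousAt

theorem erf_zero : erf 0 = 0 := by simp [erf]

theorem erfInv_erf (x : ℝ) : erfInv (erf x) = x :=
  leftInverse_invFun erf_strictMono.injective x

theorem erfInv_zero : erfInv 0 = 0 := by simpa [erf_zero] using erfInv_erf 0

theorem isOpen_range_erf : IsOpen (range erf) := erf_strictMono.isOpen_range continuous_erf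

theorem range_erf_mem_nhds_zero : range erf ∈ 𝓝 0 :=
  isOpen_range_erf.mem_nhds ⟨0, erf_zero⟩

theorem erfInv_ne_zero {y : ℝ} (hy : y ∈ range erf) (h : y ≠ 0) : erfInv y ≠ 0 := by
  obtain ⟨x, rfl⟩ := hy
  rintro hx
  rw [erfInv_erf] at hx
  exact h (by rw [hx, erf_zero])

noncomputable def erfInvDeriv (ρ : ℝ) : ℝ := √π / 2 * exp (erfInv ρ ^ 2)

theorem erfInvDeriv_zero : erfInvDeriv 0 = √π / 2 := by simp [erfInvDeriv, erfInv_zero]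

theorem hasDerivAt_erfInv {y : ℝ} (hy : y ∈ range erf) :
    HasDerivAt erfInv (erfInvDeriv y) y := by
  obtain ⟨x, rfl⟩ := hy
  refine (erf_strictMono.hasDerivAt_invFun continuous_erf (hasDerivAt_erf x)
    (by positivity)).congr_deriv ?_
  rw [erfInvDeriv, erfInv_erf, exp_neg]
  field_simp

theorem hasDerivAt_erfInvDeriv {y : ℝ} (hy : y ∈ range erf) :
    HasDerivAt erfInvDeriv (2 * erfInv y * erfInvDeriv y ^ 2) y := by
  refine ((((hasDerivAt_erfInv hy).pow 2).exp).const_mul (√π / 2)).congr_deriv ?_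
  rw [erfInvDeriv, Pi.pow_apply]
  ring

noncomputable def E' (ρ : ℝ) : ℝ :=
  erfInvDeriv ρ / erfInv ρ + 2 * ρ * erfInvDeriv ρ ^ 2 - ρ * erfInvDeriv ρ ^ 2 / erfInv ρ ^ 2

noncomputable def E'' (ρ : ℝ) : ℝ :=
  4 * erfInvDeriv ρ ^ 2 + 8 * ρ * erfInv ρ * erfInvDeriv ρ ^ 3
    - 4 * ρ * erfInvDeriv ρ ^ 3 / erfInv ρ - 2 * erfInvDeriv ρ ^ 2 / erfInv ρ ^ 2
    + 2 * ρ * erfInvDeriv ρ ^ 3 / erfInv ρ ^ 3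

theorem hasDerivAt_E {y : ℝ} (hy : y ∈ range erf \ {0}) : HasDerivAt E (E' y) y := by
  have hι := erfInv_ne_zero hy.1 hy.2
  have hE : (fun ρ => ρ * erfInvDeriv ρ / erfInv ρ) =ᶠ[𝓝 y] E := by
    filter_upwards [isOpen_range_erf.mem_nhds hy.1] with ρ hρ
    rw [E, (hasDerivAt_erfInv hρ).deriv]
  refine ((((hasDerivAt_id' y).mul (hasDerivAt_erfInvDeriv hy.1)).div
    (hasDerivAt_erfInv hy.1) hι).congr_of_eventuallyEq hE.symm).congr_deriv ?_
  simp only [E', Pi.mul_apply]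
  field_simp

theorem hasDerivAt_E' {y : ℝ} (hy : y ∈ range erf \ {0}) : HasDerivAt E' (E'' y) y := by
  have hι := erfInv_ne_zero hy.1 hy.2
  have hι' := hasDerivAt_erfInv hy.1
  have hD := hasDerivAt_erfInvDeriv hy.1
  have hρ := hasDerivAt_id' y
  refine (((hD.div hι' hι).add ((hρ.const_mul 2).mul (hD.pow 2))).sub
    ((hρ.mul (hD.pow 2)).div (hι'.pow 2) (pow_ne_zero 2 hι))).congr_deriv ?_
  simp only [E'', Pi.mul_apply, Pi.pow_apply]
  field_simp
  ring

theorem deriv_E_eqOn : EqOn (deriv E) E' (range erf \ {0}) :=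
  fun _ hy => (hasDerivAt_E hy).deriv

theorem deriv_deriv_E_eqOn : EqOn (deriv (deriv E)) E'' (range erf \ {0}) := by
  intro y hy
  have hopen : IsOpen (range erf \ {0}) := isOpen_range_erf.sdiff isClosed_singleton
  rw [(eventuallyEq_of_mem (hopen.mem_nhds hy) deriv_E_eqOn).deriv_eq]
  exact (hasDerivAt_E' hy).deriv

theorem tendsto_erfInv : Tendsto erfInv (𝓝 0) (𝓝 0) := by
  simpa [erfInv_zero] using (hasDerivAt_erfInv ⟨0, erf_zero⟩).continuousAt.tendsto

theorem tendsto_erfInvDeriv : Tendsto erfInvDeriv (𝓝 0) (𝓝 (√π / 2)) := by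
  simpa [erfInvDeriv_zero] using (hasDerivAt_erfInvDeriv ⟨0, erf_zero⟩).continuousAt.tendsto

theorem tendsto_erfInv_div_self :
    Tendsto (fun ρ => erfInv ρ / ρ) (𝓝[≠] 0) (𝓝 (√π / 2)) := by
  rw [← erfInvDeriv_zero]
  refine (hasDerivAt_erfInv ⟨0, erf_zero⟩).tendsto_slope.congr fun ρ => ?_
  rw [slope_def_field, erfInv_zero, sub_zero, sub_zero]

theorem tendsto_self_div_erfInv :
    Tendsto (fun ρ => ρ / erfInv ρ) (𝓝[≠] 0) (𝓝 (√π / 2)⁻¹) := by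
  simpa using tendsto_erfInv_div_self.inv₀ (by positivity)

-- With `s = √π/2`, `ι = sρ + s³ρ³/3 + O(ρ⁵)` and `ρι' = sρ + s³ρ³ + O(ρ⁵)`.
theorem tendsto_erfInv_sub_mul_erfInvDeriv_div_pow_three :
    Tendsto (fun ρ => (erfInv ρ - ρ * erfInvDeriv ρ) / ρ ^ 3) (𝓝[≠] 0)
      (𝓝 (-(2 / 3) * (√π / 2) ^ 3)) := by
  have hderiv : ∀ᶠ ρ in 𝓝[≠] 0, HasDerivAt (fun ρ => erfInv ρ - ρ * erfInvDeriv ρ)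
      (-(2 * ρ * erfInv ρ * erfInvDeriv ρ ^ 2)) ρ := by
    filter_upwards [nhdsWithin_le_nhds range_erf_mem_nhds_zero] with ρ hρ
    refine ((hasDerivAt_erfInv hρ).sub
      ((hasDerivAt_id' ρ).mul (hasDerivAt_erfInvDeriv hρ))).congr_deriv ?_
    ring
  have hι : Tendsto erfInv (𝓝[≠] 0) (𝓝 0) := tendsto_erfInv.mono_left nhdsWithin_le_nhds
  have hD : Tendsto erfInvDeriv (𝓝[≠] 0) (𝓝 (√π / 2)) :=
    tendsto_erfInvDeriv.mono_left nhdsWithin_le_nhds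
  have hρ : Tendsto (fun ρ : ℝ => ρ) (𝓝[≠] 0) (𝓝 0) :=
    tendsto_nhdsWithin_of_tendsto_nhds tendsto_id
  refine HasDerivAt.lhopital_zero_nhdsNE (g' := fun ρ => 3 * ρ ^ 2) hderiv
    (Eventually.of_forall fun ρ => by simpa using hasDerivAt_pow 3 ρ) ?_ ?_
    (by simpa using hρ.pow 3) ?_
  · filter_upwards [self_mem_nhdsWithin] with ρ (hρ : ρ ≠ 0)
    positivity
  · simpa using hι.sub (hρ.mul hD)
  · have h := (tendsto_erfInv_div_self.const_mul (-(2 / 3))).mul (hD.pow 2)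
    rw [show -(2 / 3) * (√π / 2) * (√π / 2) ^ 2 = -(2 / 3) * (√π / 2) ^ 3 by ring] at h
    refine h.congr' ?_
    filter_upwards [self_mem_nhdsWithin] with ρ (hρ : ρ ≠ 0)
    field_simp

theorem range_erf_diff_zero_mem_nhdsNE : range erf \ {0} ∈ 𝓝[≠] 0 :=
  sdiff_mem_nhdsWithin_compl range_erf_mem_nhds_zero {0}

theorem tendsto_E' : Tendsto E' (𝓝[≠] 0) (𝓝 0) := by
  have hD : Tendsto erfInvDeriv (𝓝[≠] 0) (𝓝 (√π / 2)) :=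
    tendsto_erfInvDeriv.mono_left nhdsWithin_le_nhds
  have hρ : Tendsto (fun ρ : ℝ => ρ) (𝓝[≠] 0) (𝓝 0) :=
    tendsto_nhdsWithin_of_tendsto_nhds tendsto_id
  have h := ((hρ.const_mul 2).mul (hD.pow 2)).add (hρ.mul
    ((hD.mul tendsto_erfInv_sub_mul_erfInvDeriv_div_pow_three).mul
      (tendsto_self_div_erfInv.pow 2)))
  rw [mul_zero, zero_mul, zero_mul, add_zero] at h
  refine h.congr' ?_
  filter_upwards [range_erf_diff_zero_mem_nhdsNE] with ρ hρ
  have hι := erfInv_ne_zero hρ.1 hρ.2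
  have hρ0 : ρ ≠ 0 := hρ.2
  rw [E']
  field_simp
  ring

theorem tendsto_E'' : Tendsto E'' (𝓝[≠] 0) (𝓝 (π / 3)) := by
  have hι : Tendsto erfInv (𝓝[≠] 0) (𝓝 0) := tendsto_erfInv.mono_left nhdsWithin_le_nhds
  have hD : Tendsto erfInvDeriv (𝓝[≠] 0) (𝓝 (√π / 2)) :=
    tendsto_erfInvDeriv.mono_left nhdsWithin_le_nhds
  have hρ : Tendsto (fun ρ : ℝ => ρ) (𝓝[≠] 0) (𝓝 0) :=
    tendsto_nhdsWithin_of_tendsto_nhds tendsto_id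
  have h := (((((hD.pow 2).const_mul 4).add (((hρ.const_mul 8).mul hι).mul (hD.pow 3))).sub
    (((hD.pow 3).const_mul 4).mul tendsto_self_div_erfInv)).sub
    ((((hD.pow 2).const_mul 2).mul tendsto_erfInv_sub_mul_erfInvDeriv_div_pow_three).mul
      (tendsto_self_div_erfInv.pow 3)))
  have hval : 4 * (√π / 2) ^ 2 + 8 * 0 * 0 * (√π / 2) ^ 3 - 4 * (√π / 2) ^ 3 * (√π / 2)⁻¹
      - 2 * (√π / 2) ^ 2 * (-(2 / 3) * (√π / 2) ^ 3) * ((√π / 2)⁻¹) ^ 3 = π / 3 := by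
    have hπ : √π ^ 2 = π := sq_sqrt pi_pos.le
    field_simp
    linear_combination 8 * hπ
  rw [hval] at h
  refine h.congr' ?_
  filter_upwards [range_erf_diff_zero_mem_nhdsNE] with ρ hρ
  have hι := erfInv_ne_zero hρ.1 hρ.2
  have hρ0 : ρ ≠ 0 := hρ.2
  rw [E'']
  field_simp
  ring

/--  and . -/
theorem erfInv_elasticity_deriv_limits :
    Filter.Tendsto (deriv E) (nhdsWithin 0 (Set.Ioi 0)) (nhds 0) ∧
    Filter.Tendsto (deriv (deriv E)) (nhdsWithin 0 (Set.Ioi 0)) (nhds (Real.pi / 3)) := by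
  have hdom : range erf \ {0} ∈ 𝓝[>] (0 : ℝ) :=
    nhdsGT_le_nhdsNE 0 range_erf_diff_zero_mem_nhdsNE
  exact ⟨(tendsto_E'.mono_left (nhdsGT_le_nhdsNE 0)).congr'
      (eventuallyEq_of_mem hdom deriv_E_eqOn).symm,
    (tendsto_E''.mono_left (nhdsGT_le_nhdsNE 0)).congr'
      (eventuallyEq_of_mem hdom deriv_deriv_E_eqOn).symm⟩
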